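/- arXiv:1801.09934 — 3 statements merged into one kernel-verified Lean document; each statement's English description precedes it below -/
import Mathlib

section
/- The variance of the number of white beads satisfies V[W_n] = 2n/45 for all n ≥ 6. -/
/-- The variance of the number of white beads in a random necklace of size `n` equals
`2n/45` for all `n ≥ 6`. Here `m n = E[Wₙ]` and `q n = E[Wₙ²]` are defined by the
moment recurrences derived from the two-point Markov transitions of the necklace
process, and the variance is `q n - (m n)²`. -/
theorem necklace_variance_white (m q : ℕ → ℝ) (hm2 : m 2 = 1) (hq2 : q 2 = 1)
    (hm : ∀ n, 2 ≤ n → m (n + 1) = (1 - 2 / (n : ℝ)) * m n + 1)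
    (hq : ∀ n, 2 ≤ n → q (n + 1) =
      (1 - 4 / (n : ℝ)) * q n + (2 - 2 / (n : ℝ)) * m n + 1) :
    ∀ n, 6 ≤ n → q n - (m n) ^ 2 = 2 * n / 45 := by
  have hm' : ∀ n, 3 ≤ n → m n = n / 3 := by
    intro n hn
    induction n, hn using Nat.le_induction with
    | base =>
      have h := hm 2 (le_refl 2)
      rw [hm2] at h
      norm_num at h
      rw [h]; norm_num
    | succ n hn ih =>
      have hn0 : (n : ℝ) ≠ 0 := Nat.cast_ne_zero.mpr (by omega)
      have h := hm n (by omega)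
      rw [h, ih]
      push_cast
      field_simp
      ring
  have hm3 : m 3 = 1 := by
    have := hm' 3 (le_refl 3); rw [this]; norm_num
  have hm4 : m 4 = 4 / 3 := by
    have := hm' 4 (by norm_num); rw [this]; norm_num
  have hq3 : q 3 = 1 := by
    have h := hq 2 (le_refl 2)
    rw [hq2, hm2] at h
    norm_num at h
    exact h
  have hq4 : q 4 = 2 := by
    have h := hq 3 (by norm_num)
    rw [hq3, hm3] at h
    norm_num at h
    linarith
  have hq5 : q 5 = 3 := by
    have h := hq 4 (by norm_num)
    rw [hq4, hm4] at h
    norm_num at h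
    linarith
  have hq' : ∀ n, 5 ≤ n → q n = (n : ℝ) ^ 2 / 9 + 2 * n / 45 := by
    intro n hn
    induction n, hn using Nat.le_induction with
    | base => rw [hq5]; norm_num
    | succ n hn ih =>
      have hn0 : (n : ℝ) ≠ 0 := Nat.cast_ne_zero.mpr (by omega)
      have h := hq n (by omega)
      rw [ih, hm' n (by omega)] at h
      rw [h]
      push_cast
      field_simp
      ring
  intro n hn
  rw [hq' n (by omega), hm' n (by omega)]
  ring
end

section
/- The function W(z,u) = u/(√(1-u)·coth(z√(1-u)) - 1) satisfies the PDE (1 - zu) ∂_z W = 2u(1-u) ∂_u W + u W + u, with W(0,u) = 0. -/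
/-- The hyperbolic cotangent. -/
noncomputable def coth (x : ℝ) : ℝ := Real.cosh x / Real.sinh x

/-- The bivariate probability generating function of the necklace process,
`W(z,u) = u / (√(1-u) coth(z √(1-u)) - 1)`. -/
noncomputable def necklaceW (z u : ℝ) : ℝ :=
  u / (Real.sqrt (1 - u) * coth (z * Real.sqrt (1 - u)) - 1)

lemma hasDerivAt_coth {x : ℝ} (hx : Real.sinh x ≠ 0) :
    HasDerivAt coth (1 - coth x ^ 2) x := by
  have h := (Real.hasDerivAt_cosh x).div (Real.hasDerivAt_sinh x) hx
  refine HasDerivAt.congr_deriv (f := coth) h ?_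
  have hc : Real.cosh x ^ 2 - Real.sinh x ^ 2 = 1 := Real.cosh_sq_sub_sinh_sq x
  simp only [coth]
  field_simp

set_option maxHeartbeats 1000000 in
/-- `W(z,u) = u/(√(1-u) coth(z√(1-u)) - 1)` is differentiable in both variables and
satisfies the PDE `(1 - zu) ∂_z W = 2u(1-u) ∂_u W + u W + u`, with `W(z,u) → 0` as
`z → 0⁺`. -/
theorem necklace_bgf_pde (u : ℝ) (hu : u ∈ Set.Ioo (0 : ℝ) 1) (z : ℝ) (hz : 0 < z)
    (h : 1 < Real.sqrt (1 - u) * coth (z * Real.sqrt (1 - u))) :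
    DifferentiableAt ℝ (fun z' => necklaceW z' u) z ∧
    DifferentiableAt ℝ (fun u' => necklaceW z u') u ∧
    (1 - z * u) * deriv (fun z' => necklaceW z' u) z
      = 2 * u * (1 - u) * deriv (fun u' => necklaceW z u') u
        + u * necklaceW z u + u ∧
    Filter.Tendsto (fun z' => necklaceW z' u) (nhdsWithin 0 (Set.Ioi 0)) (nhds 0) := by
  obtain ⟨hu0, hu1⟩ := hu
  have h1u : (0:ℝ) < 1 - u := by linarith
  set α : ℝ := Real.sqrt (1 - u) with hαdef
  have hα : 0 < α := Real.sqrt_pos.2 h1u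
  have hα2 : α ^ 2 = 1 - u := Real.sq_sqrt h1u.le
  have hsinh : Real.sinh (z * α) ≠ 0 := ne_of_gt (Real.sinh_pos_iff.2 (by positivity))
  set c : ℝ := coth (z * α) with hcdef
  have hD : α * c - 1 ≠ 0 := by
    have : 1 < α * c := h
    intro hcon; linarith [sub_eq_zero.mp hcon]
  -- derivative in z
  have hz1 : HasDerivAt (fun z' : ℝ => z' * α) α z := by
    simpa using (hasDerivAt_id z).mul_const α
  have hcz : HasDerivAt (fun z' => coth (z' * α)) ((1 - c ^ 2) * α) z :=
    by have := (hasDerivAt_coth hsinh).comp z hz1; rw [hcdef]; exact this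
  have hDz : HasDerivAt (fun z' => α * coth (z' * α) - 1) (α * ((1 - c ^ 2) * α)) z :=
    (hcz.const_mul α).sub_const 1
  have hWz : HasDerivAt (fun z' => necklaceW z' u)
      ((0 * (α * c - 1) - u * (α * ((1 - c ^ 2) * α))) / (α * c - 1) ^ 2) z := by
    simp only [necklaceW, ← hαdef]
    exact (hasDerivAt_const z u).div hDz hD
  -- derivative in u
  have hαu : HasDerivAt (fun u' : ℝ => Real.sqrt (1 - u')) (-(1 / (2 * α))) u := by
    have h1 : HasDerivAt (fun u' : ℝ => 1 - u') (-1) u := by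
      simpa using (hasDerivAt_id u).const_sub (1:ℝ)
    have h2 := (Real.hasDerivAt_sqrt (ne_of_gt h1u)).comp u h1
    refine h2.congr_deriv ?_
    rw [← hαdef]; ring
  have hcu : HasDerivAt (fun u' => coth (z * Real.sqrt (1 - u')))
      ((1 - c ^ 2) * (z * -(1 / (2 * α)))) u := by
    have := (hasDerivAt_coth hsinh).comp u (hαu.const_mul z)
    exact this
  have hDu : HasDerivAt (fun u' => Real.sqrt (1 - u') * coth (z * Real.sqrt (1 - u')) - 1)
      (-(1 / (2 * α)) * c + α * ((1 - c ^ 2) * (z * -(1 / (2 * α))))) u := by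
    have := (hαu.mul hcu).sub_const 1
    simpa [← hαdef] using this
  have hWu : HasDerivAt (fun u' => necklaceW z u')
      ((1 * (α * c - 1) - u * (-(1 / (2 * α)) * c + α * ((1 - c ^ 2) * (z * -(1 / (2 * α))))))
        / (α * c - 1) ^ 2) u := by
    simp only [necklaceW]
    exact (hasDerivAt_id u).div hDu hD
  refine ⟨hWz.differentiableAt, hWu.differentiableAt, ?_, ?_⟩
  · rw [hWz.deriv, hWu.deriv]
    have hW : necklaceW z u = u / (α * c - 1) := by simp only [necklaceW, ← hαdef, ← hcdef]
    rw [hW]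
    rw [show u = 1 - α ^ 2 by linarith]
    field_simp
    ring
  · -- tendsto 0
    have hsc : Continuous (fun z' : ℝ => Real.sinh (z' * α)) :=
      Real.continuous_sinh.comp (continuous_id.mul continuous_const)
    have hcc : Continuous (fun z' : ℝ => Real.cosh (z' * α)) :=
      Real.continuous_cosh.comp (continuous_id.mul continuous_const)
    have hs0 : Filter.Tendsto (fun z' : ℝ => Real.sinh (z' * α)) (nhdsWithin 0 (Set.Ioi 0))
        (nhdsWithin 0 (Set.Ioi 0)) := by
      apply tendsto_nhdsWithin_of_tendsto_nhds_of_eventually_within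
      · have := (hsc.tendsto 0).mono_left (nhdsWithin_le_nhds (s := Set.Ioi (0:ℝ)))
        simpa using this
      · filter_upwards [self_mem_nhdsWithin] with x hx
        exact Real.sinh_pos_iff.2 (mul_pos (Set.mem_Ioi.mp hx) hα)
    have hc0 : Filter.Tendsto (fun z' : ℝ => Real.cosh (z' * α)) (nhdsWithin 0 (Set.Ioi 0))
        (nhds 1) := by
      have := (hcc.tendsto 0).mono_left (nhdsWithin_le_nhds (s := Set.Ioi (0:ℝ)))
      simpa using this
    have hcoth : Filter.Tendsto (fun z' : ℝ => coth (z' * α)) (nhdsWithin 0 (Set.Ioi 0))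
        Filter.atTop := by
      have hinv : Filter.Tendsto (fun z' : ℝ => (Real.sinh (z' * α))⁻¹)
          (nhdsWithin 0 (Set.Ioi 0)) Filter.atTop := tendsto_inv_nhdsGT_zero.comp hs0
      have := hc0.pos_mul_atTop one_pos hinv
      simpa [coth, div_eq_mul_inv] using this
    have hDen : Filter.Tendsto (fun z' : ℝ => α * coth (z' * α) - 1)
        (nhdsWithin 0 (Set.Ioi 0)) Filter.atTop := by
      have := Filter.tendsto_atTop_add_const_right _ (-1) (hcoth.const_mul_atTop hα)
      simpa [sub_eq_add_neg] using this
    have hfin := Filter.Tendsto.div_atTop (f := fun _ : ℝ => u)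
      (tendsto_const_nhds) hDen
    have : (fun z' => necklaceW z' u) = fun z' => u / (α * coth (z' * α) - 1) := by
      funext z'; simp only [necklaceW, ← hαdef]
    rw [this]
    exact hfin
end

section
/- The number of binary necklaces of length n with no two adjacent white beads (n ≥ 2, counted up to rotation) is asymptotically φⁿ/n + O(φ^{n/2}/n), where φ = (1+√5)/2 is the golden ratio. -/
/-- A cyclic two-coloring of `n` beads (white = `true`) with no two adjacent white
beads. -/
def IsValidNecklace {n : ℕ} (f : ZMod n → Bool) : Prop :=
  ∀ i : ZMod n, ¬(f i = true ∧ f (i + 1) = true)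

/-- The number of binary necklaces of length `n` with no two adjacent white beads,
counted up to rotation. -/
noncomputable def necklaceCount (n : ℕ) : ℕ :=
  Nat.card (Quot (fun f g : {f : ZMod n → Bool // IsValidNecklace f} =>
    ∃ r : ZMod n, ∀ i, f.1 (i + r) = g.1 i))

open List


def okB (b : Bool) : List Bool → Bool → Bool
  | [], c => !(b && c)
  | x :: l, c => (!(b && x)) && okB x l c

noncomputable def cntB (b c : Bool) (m : ℕ) : ℕ :=
  Nat.card {g : Fin m → Bool // (okB b (List.ofFn g) c) = true}

def nadj (x y : Bool) : Prop := (x && y) = false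

lemma okB_iff_chain (b c : Bool) (l : List Bool) :
    okB b l c = true ↔ List.Chain nadj b (l ++ [c]) := by
  induction l generalizing b with
  | nil => cases b <;> cases c <;> simp [okB, List.Chain, List.chain_cons, nadj]
  | cons x l ih =>
      rw [cons_append]
      simp only [List.Chain] at ih ⊢
      rw [List.chain_cons, ← ih]
      cases b <;> cases x <;> simp [okB, nadj]

lemma cntB_succ (b c : Bool) (m : ℕ) :
    cntB b c (m + 1) = (if b then 0 else cntB true c m) + cntB false c m := by
  have e1 : {g : Fin (m+1) → Bool // (okB b (List.ofFn g) c) = true}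
      ≃ {p : Bool × (Fin m → Bool) // ((!(b && p.1)) && okB p.1 (List.ofFn p.2) c) = true} :=
    (Fin.consEquiv fun _ => Bool).symm.subtypeEquiv (by
      intro g
      rw [List.ofFn_succ]
      rfl)
  have e2 : {p : Bool × (Fin m → Bool) // ((!(b && p.1)) && okB p.1 (List.ofFn p.2) c) = true}
      ≃ Σ x : Bool, {h : Fin m → Bool // ((!(b && x)) && okB x (List.ofFn h) c) = true} :=
    Equiv.subtypeProdEquivSigmaSubtype
      (fun (x : Bool) (h : Fin m → Bool) => ((!(b && x)) && okB x (List.ofFn h) c) = true)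
  rw [cntB, Nat.card_congr (e1.trans e2), Nat.card_eq_fintype_card, Fintype.card_sigma,
    Fintype.sum_bool]
  cases b <;> simp [cntB, Nat.card_eq_fintype_card]

lemma cntB_zero (b c : Bool) : cntB b c 0 = if (b && c) then 0 else 1 := by
  cases b <;> cases c <;>
    simp [cntB, okB, Nat.card_eq_fintype_card, Fintype.card_subtype]

lemma cntB_fib : ∀ m : ℕ, cntB false false m = Nat.fib (m+2) ∧ cntB true false m = Nat.fib (m+1)
    ∧ cntB false true m = Nat.fib (m+1) ∧ cntB true true m = Nat.fib m := by
  intro m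
  induction m with
  | zero => refine ⟨?_, ?_, ?_, ?_⟩ <;> simp [cntB_zero]
  | succ m ih =>
      obtain ⟨h1, h2, h3, h4⟩ := ih
      refine ⟨?_, ?_, ?_, ?_⟩ <;> rw [cntB_succ] <;>
        simp [h1, h2, h3, h4, Nat.fib_add_two] <;> omega


lemma valid_iff_okB (m : ℕ) (f : ZMod (m+1) → Bool) :
    IsValidNecklace f
      ↔ (okB (f 0) (List.ofFn fun i : Fin m => f ((i : ℕ) + 1)) (f 0)) = true := by
  rw [okB_iff_chain]
  have hl : List.ofFn (fun j : Fin (m+2) => f ((j : ℕ)))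
      = (f 0) :: ((List.ofFn fun i : Fin m => f ((i : ℕ) + 1)) ++ [f 0]) := by
    rw [List.ofFn_succ, List.ofFn_succ', List.concat_eq_append]
    congr 1
    congr 1
    · congr 1
      funext i
      congr 1
      push_cast [Fin.val_succ, Fin.coe_castSucc]
      ring
    · simp [ZMod.natCast_self]
  have h2 : List.Chain nadj (f 0) ((List.ofFn fun i : Fin m => f ((i : ℕ) + 1)) ++ [f 0])
      ↔ List.Chain' nadj (List.ofFn (fun j : Fin (m+2) => f ((j : ℕ)))) := by
    rw [hl]
    exact Iff.rfl
  rw [h2, show List.Chain' nadj (List.ofFn (fun j : Fin (m+2) => f ((j : ℕ)))) ↔ _ from List.isChain_ofFn]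
  constructor
  · intro hv i hi
    have := hv ((i : ℕ) : ZMod (m+1))
    simp only [nadj]
    push_cast
    revert this
    cases h1 : f ((i : ℕ) : ZMod (m+1)) <;> cases h2 : f (((i : ℕ) : ZMod (m+1)) + 1) <;> simp
  · intro h j hj
    have hlt : j.val + 1 < m + 2 := by have := ZMod.val_lt j; omega
    have := h j.val hlt
    simp only [nadj] at this
    push_cast at this
    rw [ZMod.natCast_zmod_val] at this
    revert this
    cases h1 : f j <;> cases h2 : f (j + 1) <;> simp_all

/-- Splitting a necklace function at `0`. -/
def splitEquiv (m : ℕ) : (ZMod (m+1) → Bool) ≃ Bool × (Fin m → Bool) where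
  toFun f := (f 0, fun i => f ((i : ℕ) + 1))
  invFun p := fun j => if h : j.val = 0 then p.1
    else p.2 ⟨j.val - 1, by have := ZMod.val_lt j; omega⟩
  left_inv f := by
    funext j
    by_cases h : j.val = 0
    · have : j = 0 := (ZMod.val_eq_zero j).mp h
      simp [h, this]
    · simp only [h, dif_neg, not_false_iff]
      congr 1
      have h1 : ((j.val - 1 : ℕ) : ZMod (m+1)) + 1 = ((j.val - 1 + 1 : ℕ) : ZMod (m+1)) := by
        push_cast; ring
      rw [h1]
      have h2 : j.val - 1 + 1 = j.val := Nat.succ_pred_eq_of_pos (Nat.pos_of_ne_zero h)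
      rw [h2, ZMod.natCast_zmod_val]
  right_inv p := by
    refine Prod.ext ?_ ?_
    · simp [ZMod.val_zero]
    · funext i
      have hv : (((i : ℕ) + 1 : ZMod (m+1))).val = (i : ℕ) + 1 := by
        have : ((i : ℕ) + 1 : ZMod (m+1)) = (((i : ℕ) + 1 : ℕ) : ZMod (m+1)) := by push_cast; ring
        rw [this, ZMod.val_cast_of_lt (by omega)]
      simp only [hv]
      simp

lemma card_valid (m : ℕ) :
    Nat.card {f : ZMod (m+1) → Bool // IsValidNecklace f} = Nat.fib (m+2) + Nat.fib m := by
  have e1 : {f : ZMod (m+1) → Bool // IsValidNecklace f}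
      ≃ {p : Bool × (Fin m → Bool) // (okB p.1 (List.ofFn p.2) p.1) = true} :=
    (splitEquiv m).subtypeEquiv (by intro f; exact valid_iff_okB m f)
  have e2 : {p : Bool × (Fin m → Bool) // (okB p.1 (List.ofFn p.2) p.1) = true}
      ≃ Σ x : Bool, {h : Fin m → Bool // (okB x (List.ofFn h) x) = true} :=
    Equiv.subtypeProdEquivSigmaSubtype
      (fun (x : Bool) (h : Fin m → Bool) => (okB x (List.ofFn h) x) = true)
  rw [Nat.card_congr (e1.trans e2), Nat.card_eq_fintype_card, Fintype.card_sigma,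
    Fintype.sum_bool]
  have h1 := (cntB_fib m).1
  have h4 := (cntB_fib m).2.2.2
  rw [cntB, Nat.card_eq_fintype_card] at h1 h4
  rw [h1, h4, Nat.add_comm]


abbrev Nk (n : ℕ) := {f : ZMod n → Bool // IsValidNecklace f}

instance (n : ℕ) : AddAction (ZMod n) (Nk n) where
  vadd r f := ⟨fun i => f.1 (i + r), by
    intro i
    have := f.2 (i + r)
    simpa [add_assoc, add_comm, add_left_comm] using this⟩
  zero_vadd f := Subtype.ext (funext fun i => by
    show f.1 (i + 0) = f.1 i
    rw [add_zero])
  add_vadd r s f := Subtype.ext (funext fun i => by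
    show f.1 (i + (r + s)) = f.1 (i + r + s)
    rw [add_assoc])

lemma nk_vadd_apply {n : ℕ} (r : ZMod n) (f : Nk n) (i : ZMod n) :
    (r +ᵥ f).1 i = f.1 (i + r) := rfl

lemma necklaceCount_eq (n : ℕ) :
    necklaceCount n = Nat.card (AddAction.orbitRel.Quotient (ZMod n) (Nk n)) := by
  apply Nat.card_congr
  apply Quot.congr (Equiv.refl _)
  intro f g
  simp only [Equiv.refl_apply]
  constructor
  · rintro ⟨r, hr⟩
    show f ∈ AddAction.orbit (ZMod n) g
    refine ⟨-r, ?_⟩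
    refine Subtype.ext (funext fun i => ?_)
    rw [nk_vadd_apply]
    have := hr (i + -r)
    rw [add_assoc, neg_add_cancel, add_zero] at this
    exact this.symm
  · rintro ⟨s, hs⟩
    refine ⟨-s, fun i => ?_⟩
    have : f.1 = fun i => g.1 (i + s) := by
      rw [← hs]; rfl
    rw [this]
    show g.1 (i + -s + s) = g.1 i
    rw [add_assoc, neg_add_cancel, add_zero]

lemma burnside (n : ℕ) [NeZero n] :
    (∑ r : ZMod n, Nat.card (AddAction.fixedBy (Nk n) r)) = necklaceCount n * n := by
  letI : Fintype (Nk n) := Fintype.ofFinite _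
  letI : ∀ a : ZMod n, Fintype (AddAction.fixedBy (Nk n) a) := fun a => Fintype.ofFinite _
  letI : Fintype (AddAction.orbitRel.Quotient (ZMod n) (Nk n)) := Fintype.ofFinite _
  have := AddAction.sum_card_fixedBy_eq_card_orbits_mul_card_addGroup (ZMod n) (Nk n)
  rw [necklaceCount_eq, Nat.card_eq_fintype_card]
  simp only [Nat.card_eq_fintype_card]
  rw [this, ZMod.card]

lemma fixedBy_zero_card (n : ℕ) :
    Nat.card (AddAction.fixedBy (Nk n) (0 : ZMod n)) = Nat.card (Nk n) := by
  apply Nat.card_congr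
  have : AddAction.fixedBy (Nk n) (0 : ZMod n) = Set.univ := by
    ext f
    simp [AddAction.fixedBy]
  rw [this]
  exact Equiv.Set.univ _

lemma shift_nsmul {n : ℕ} (F : ZMod n → Bool) (c : ZMod n)
    (h : ∀ i, F (i + c) = F i) : ∀ (k : ℕ) (i), F (i + k • c) = F i := by
  intro k
  induction k with
  | zero => intro i; simp
  | succ k ih =>
      intro i
      rw [succ_nsmul, ← add_assoc, h, ih]

lemma fixedBy_card_le (n : ℕ) [NeZero n] (r : ZMod n) (hr : r ≠ 0) :
    Nat.card (AddAction.fixedBy (Nk n) r) ≤ Nat.card (Nk (Nat.gcd r.val n)) := by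
  set d : ℕ := Nat.gcd r.val n with hd
  have hn : 0 < n := Nat.pos_of_ne_zero (NeZero.ne n)
  have hdpos : 0 < d := Nat.gcd_pos_of_pos_right _ hn
  haveI : NeZero d := ⟨by omega⟩
  -- periodicity of fixed necklaces
  have key : ∀ f : Nk n, f ∈ AddAction.fixedBy (Nk n) r →
      ∀ a : ℕ, f.1 ((a : ZMod n)) = f.1 (((a % d : ℕ) : ZMod n)) := by
    intro f hf a
    have hstep : ∀ i, f.1 (i + r) = f.1 i := by
      intro i
      have : (r +ᵥ f) = f := hf
      have := congrFun (congrArg Subtype.val this) i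
      rw [nk_vadd_apply] at this
      exact this
    have hdcast : ((d : ℕ) : ZMod n) = ((Nat.gcdA r.val n : ZMod n)).val • r := by
      have hz : (d : ℤ) = r.val * Nat.gcdA r.val n + n * Nat.gcdB r.val n :=
        Nat.gcd_eq_gcd_ab r.val n
      have : ((d : ℕ) : ZMod n) = ((r.val : ZMod n)) * ((Nat.gcdA r.val n : ZMod n)) := by
        have := congrArg (fun z : ℤ => (z : ZMod n)) hz
        push_cast at this
        rw [ZMod.natCast_self] at this
        simpa using this
      rw [this, ZMod.natCast_zmod_val, nsmul_eq_mul, ZMod.natCast_zmod_val, mul_comm]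
    have hdstep : ∀ i, f.1 (i + ((d : ℕ) : ZMod n)) = f.1 i := by
      intro i
      rw [hdcast]
      exact shift_nsmul f.1 r hstep _ i
    have : (a : ZMod n) = ((a % d : ℕ) : ZMod n) + (a / d : ℕ) • ((d : ℕ) : ZMod n) := by
      rw [nsmul_eq_mul]
      have h0 := congrArg (fun z : ℕ => (z : ZMod n)) (Nat.mod_add_div a d)
      push_cast at h0
      rw [← h0]
      ring
    rw [this, shift_nsmul f.1 _ hdstep]
  -- the injection
  set Φ : AddAction.fixedBy (Nk n) r → Nk d := fun f =>
    ⟨fun j : ZMod d => f.1.1 ((j.val : ZMod n)), by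
      intro j
      have hval : f.1.1 (((j + 1 : ZMod d).val : ℕ) : ZMod n)
          = f.1.1 ((j.val : ZMod n) + 1) := by
        have h1 : (j + 1 : ZMod d) = (((j.val + 1 : ℕ) : ZMod d)) := by
          push_cast
          rw [ZMod.natCast_zmod_val]
        rw [h1, ZMod.val_natCast, ← key f.1 f.2 (j.val + 1)]
        push_cast
        ring_nf
      have := f.1.2 ((j.val : ZMod n))
      rw [← hval] at this
      exact this⟩ with hPhi
  have hinj : Function.Injective Φ := by
    intro f g hfg
    have hval : ∀ i : ZMod n, f.1.1 i = g.1.1 i := by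
      intro i
      have h1 : f.1.1 i = f.1.1 ((i.val : ZMod n)) := by rw [ZMod.natCast_zmod_val]
      have h2 : g.1.1 i = g.1.1 ((i.val : ZMod n)) := by rw [ZMod.natCast_zmod_val]
      rw [h1, h2, key f.1 f.2 i.val, key g.1 g.2 i.val]
      have := congrFun (congrArg Subtype.val hfg) ((i.val : ℕ) : ZMod d)
      simp only [hPhi] at this
      rw [ZMod.val_natCast] at this
      exact this
    exact Subtype.ext (Subtype.ext (funext hval))
  exact Nat.card_le_card_of_injective Φ hinj

open Real in
lemma fibR_le (k : ℕ) : (Nat.fib k : ℝ) ≤ goldenRatio ^ k := by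
  rw [Real.coe_fib_eq]
  have h5 : (2 : ℝ) ≤ Real.sqrt 5 := by
    nlinarith [Real.sq_sqrt (by norm_num : (5:ℝ) ≥ 0), Real.sqrt_nonneg 5]
  have hψ : |goldenConj ^ k| ≤ 1 := by
    rw [abs_pow]
    apply pow_le_one₀ (abs_nonneg _)
    rw [abs_le]
    constructor <;> nlinarith [goldenConj_neg, neg_one_lt_goldenConj]
  have hφ : (1:ℝ) ≤ goldenRatio ^ k := one_le_pow₀ (le_of_lt one_lt_goldenRatio)
  rw [div_le_iff₀ (by nlinarith)]
  have := abs_le.mp hψ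
  nlinarith

open Real in
lemma binet_lucas (m : ℕ) :
    (Nat.fib (m+2) : ℝ) + (Nat.fib m : ℝ) = goldenRatio ^ (m+1) + goldenConj ^ (m+1) := by
  have h5 : goldenRatio - goldenConj = Real.sqrt 5 := goldenRatio_sub_goldenConj
  have hne : goldenRatio - goldenConj ≠ 0 := by
    rw [h5]
    positivity
  rw [Real.coe_fib_eq, Real.coe_fib_eq, ← add_div, ← h5, div_eq_iff hne]
  have hm : goldenRatio * goldenConj = -1 := goldenRatio_mul_goldenConj
  linear_combination (goldenRatio ^ m - goldenConj ^ m) * hm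

open Real in
lemma cardNk_le_real (d : ℕ) (hd : 0 < d) : (Nat.card (Nk d) : ℝ) ≤ 3 * goldenRatio ^ d := by
  obtain ⟨e, rfl⟩ : ∃ e, d = e + 1 := ⟨d - 1, by omega⟩
  rw [card_valid]
  push_cast
  have h2 := fibR_le (e+2)
  have h0 := fibR_le e
  have hpos : (0:ℝ) < goldenRatio ^ e := pow_pos goldenRatio_pos e
  have hsq : goldenRatio ^ (e+2) = goldenRatio ^ e * (goldenRatio * goldenRatio) := by ring
  have hs1 : goldenRatio ^ (e+1) = goldenRatio ^ e * goldenRatio := by ring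
  have hgs : goldenRatio * goldenRatio = goldenRatio + 1 := by
    have := goldenRatio_sq
    nlinarith [goldenRatio_sq]
  nlinarith [one_lt_goldenRatio, goldenRatio_lt_two]

set_option maxHeartbeats 1600000 in
open Real in
/-- The number of binary necklaces of length `n ≥ 2` with no two adjacent white
beads, counted up to rotation, is `φⁿ/n + O(φ^{n/2}/n)` where `φ = (1+√5)/2`. -/
theorem necklace_count_asymptotics :
    ∃ C : ℝ, 0 < C ∧ ∀ n : ℕ, 2 ≤ n →
      |(necklaceCount n : ℝ) - ((1 + Real.sqrt 5) / 2) ^ n / n|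
        ≤ C * ((1 + Real.sqrt 5) / 2) ^ ((n : ℝ) / 2) / n := by
  set q : ℝ := goldenRatio ^ ((1:ℝ)/6) with hq
  have hq1 : 1 < q := by
    rw [hq]
    exact (Real.one_lt_rpow_iff_of_pos goldenRatio_pos).mpr (Or.inl ⟨one_lt_goldenRatio, by norm_num⟩)
  have hCpos : (0:ℝ) < 4 + 3/(q-1) := by
    have h1 : (0:ℝ) < 3/(q-1) := div_pos (by norm_num) (by linarith)
    linarith
  refine ⟨4 + 3/(q-1), hCpos, ?_⟩
  intro n hn
  haveI : NeZero n := ⟨by omega⟩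
  have hgold : ((1 + Real.sqrt 5) / 2) = goldenRatio := rfl
  rw [hgold]
  -- Burnside decomposition
  have hb := burnside n
  have hsplit : Nat.card (Nk n) + ∑ r ∈ (Finset.univ.erase (0 : ZMod n)),
      Nat.card (AddAction.fixedBy (Nk n) r) = necklaceCount n * n := by
    rw [← hb, ← fixedBy_zero_card]
    exact Finset.add_sum_erase _ (fun r => Nat.card (AddAction.fixedBy (Nk n) r))
      (Finset.mem_univ (0 : ZMod n))
  set F : ℕ := Nat.card (Nk n) with hF
  set E : ℕ := ∑ r ∈ (Finset.univ.erase (0 : ZMod n)),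
      Nat.card (AddAction.fixedBy (Nk n) r) with hE
  -- |F - φ^n| ≤ 1
  have hFest : |(F : ℝ) - goldenRatio ^ n| ≤ 1 := by
    obtain ⟨m, rfl⟩ : ∃ m, n = m + 1 := ⟨n - 1, by omega⟩
    rw [hF, card_valid m]
    push_cast
    rw [binet_lucas m]
    have hψ : |goldenConj ^ (m+1)| ≤ 1 := by
      rw [abs_pow]
      apply pow_le_one₀ (abs_nonneg _)
      rw [abs_le]
      constructor <;> nlinarith [goldenConj_neg, neg_one_lt_goldenConj]
    calc |goldenRatio ^ (m+1) + goldenConj ^ (m+1) - goldenRatio ^ (m+1)|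
        = |goldenConj ^ (m+1)| := by ring_nf
      _ ≤ 1 := hψ
  -- bound on E
  set h0 : ZMod n := ((n / 2 : ℕ) : ZMod n) with hh0
  have hEbound : (E : ℝ) ≤ 3 * goldenRatio ^ ((n:ℝ)/2) + (n:ℝ) * (3 * goldenRatio ^ ((n:ℝ)/3)) := by
    have hterm : ∀ r ∈ Finset.univ.erase (0 : ZMod n),
        ((Nat.card (AddAction.fixedBy (Nk n) r) : ℝ))
          ≤ 3 * goldenRatio ^ ((n:ℝ)/3)
            + (if r = h0 then 3 * goldenRatio ^ ((n:ℝ)/2) else 0) := by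
      intro r hr
      have hr0 : r ≠ 0 := Finset.ne_of_mem_erase hr
      set d : ℕ := Nat.gcd r.val n with hd
      have hrv : r.val ≠ 0 := fun h => hr0 ((ZMod.val_eq_zero r).mp h)
      have hnpos : 0 < n := Nat.pos_of_ne_zero (NeZero.ne n)
      have hdpos : 0 < d := Nat.gcd_pos_of_pos_right _ hnpos
      have hdvd : d ∣ n := Nat.gcd_dvd_right _ _
      have hdle : d ≤ r.val := Nat.gcd_le_left _ (Nat.pos_of_ne_zero hrv)
      have hrlt : r.val < n := ZMod.val_lt r
      obtain ⟨k, hk⟩ := hdvd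
      have hk2 : 2 ≤ k := by
        by_contra hcon
        push_neg at hcon
        interval_cases k <;> omega
      have h2d : 2 * d ≤ n := by nlinarith
      have hcard : (Nat.card (AddAction.fixedBy (Nk n) r) : ℝ) ≤ 3 * goldenRatio ^ d := by
        have h1 := fixedBy_card_le n r hr0
        have h2 := cardNk_le_real d hdpos
        calc (Nat.card (AddAction.fixedBy (Nk n) r) : ℝ)
            ≤ (Nat.card (Nk d) : ℝ) := by exact_mod_cast h1
          _ ≤ 3 * goldenRatio ^ d := h2
      have hpowle : ∀ x : ℝ, (d : ℝ) ≤ x → goldenRatio ^ d ≤ goldenRatio ^ x := by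
        intro x hx
        rw [← Real.rpow_natCast goldenRatio d]
        exact Real.rpow_le_rpow_of_exponent_le (le_of_lt one_lt_goldenRatio) hx
      by_cases hcase : r = h0
      · -- use the n/2 bound
        rw [if_pos hcase]
        have : goldenRatio ^ d ≤ goldenRatio ^ ((n:ℝ)/2) := by
          apply hpowle
          have h2d' : ((2*d : ℕ) : ℝ) ≤ ((n:ℕ) : ℝ) := Nat.cast_le.mpr h2d
          push_cast at h2d'
          linarith
        have hnn : (0:ℝ) ≤ 3 * goldenRatio ^ ((n:ℝ)/3) := by positivity
        nlinarith
      · -- r ≠ h0 : show 3*d ≤ n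
        rw [if_neg hcase, add_zero]
        have h3d : 3 * d ≤ n := by
          rcases Nat.lt_or_ge k 3 with h | h
          · -- k = 2, derive r = h0, contradiction
            exfalso
            have hk2' : k = 2 := by omega
            subst hk2'
            have hn2d : n = 2 * d := by omega
            have hdr : d ∣ r.val := Nat.gcd_dvd_left _ _
            have hrd : r.val = d := by
              obtain ⟨j, hj⟩ := hdr
              rcases j with _ | _ | j
              · omega
              · omega
              · exfalso
                have : d * 2 ≤ d * (j + 1 + 1) := Nat.mul_le_mul le_rfl (by omega)
                omega
            apply hcase
            have : r = ((r.val : ℕ) : ZMod n) := (ZMod.natCast_zmod_val r).symm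
            rw [this, hh0, hrd]
            congr 1
            omega
          · nlinarith
        have : goldenRatio ^ d ≤ goldenRatio ^ ((n:ℝ)/3) := by
          apply hpowle
          have h3d' : ((3*d : ℕ) : ℝ) ≤ ((n:ℕ) : ℝ) := Nat.cast_le.mpr h3d
          push_cast at h3d'
          linarith
        nlinarith
    calc (E : ℝ) = ∑ r ∈ Finset.univ.erase (0 : ZMod n),
            ((Nat.card (AddAction.fixedBy (Nk n) r) : ℝ)) := by
          rw [hE]; push_cast; rfl
      _ ≤ ∑ r ∈ Finset.univ.erase (0 : ZMod n),
            (3 * goldenRatio ^ ((n:ℝ)/3)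
              + (if r = h0 then 3 * goldenRatio ^ ((n:ℝ)/2) else 0)) :=
          Finset.sum_le_sum hterm
      _ ≤ 3 * goldenRatio ^ ((n:ℝ)/2) + (n:ℝ) * (3 * goldenRatio ^ ((n:ℝ)/3)) := by
          rw [Finset.sum_add_distrib, Finset.sum_const,
            Finset.sum_ite_eq' (Finset.univ.erase (0 : ZMod n)) h0
              (fun _ => 3 * goldenRatio ^ ((n:ℝ)/2)), nsmul_eq_mul]
          have hcn : ((Finset.univ.erase (0 : ZMod n)).card : ℝ) ≤ (n:ℝ) := by
            have h1 : (Finset.univ.erase (0 : ZMod n)).card ≤ Finset.univ.card :=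
              Finset.card_le_card (Finset.erase_subset _ _)
            have h2 : (Finset.univ : Finset (ZMod n)).card = n := by
              rw [Finset.card_univ, ← Nat.card_eq_fintype_card, Nat.card_zmod]
            have h3 : (Finset.univ.erase (0 : ZMod n)).card ≤ n := by omega
            exact_mod_cast h3
          have hB : (0:ℝ) ≤ 3 * goldenRatio ^ ((n:ℝ)/3) := by positivity
          have hA : (if h0 ∈ Finset.univ.erase (0 : ZMod n)
              then 3 * goldenRatio ^ ((n:ℝ)/2) else 0) ≤ 3 * goldenRatio ^ ((n:ℝ)/2) := by
            split_ifs
            · exact le_rfl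
            · positivity
          nlinarith
  -- final assembly
  have hnR : (0:ℝ) < n := by
    have : (0:ℕ) < n := by omega
    exact_mod_cast this
  have hkey : (necklaceCount n : ℝ) * n = (F : ℝ) + (E : ℝ) := by
    have := congrArg (fun z : ℕ => (z : ℝ)) hsplit
    push_cast at this
    linarith
  have hbern : (n:ℝ) * (q - 1) ≤ q ^ n := by
    have h := one_add_mul_le_pow (a := q - 1) (by nlinarith) n
    have h2 : (1 : ℝ) + (q - 1) = q := by ring
    rw [h2] at h
    linarith
  have hq6 : q ^ n = goldenRatio ^ ((n:ℝ)/6) := by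
    rw [hq, ← Real.rpow_natCast (goldenRatio ^ ((1:ℝ)/6)) n, ← Real.rpow_mul (le_of_lt goldenRatio_pos)]
    congr 1
    ring
  have hsplitpow : goldenRatio ^ ((n:ℝ)/6) * goldenRatio ^ ((n:ℝ)/3)
      = goldenRatio ^ ((n:ℝ)/2) := by
    rw [← Real.rpow_add goldenRatio_pos]
    congr 1
    ring
  have hone : (1:ℝ) ≤ goldenRatio ^ ((n:ℝ)/2) := by
    have h0 : goldenRatio ^ (0:ℝ) = 1 := Real.rpow_zero _
    rw [← h0]
    apply Real.rpow_le_rpow_of_exponent_le (le_of_lt one_lt_goldenRatio)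
    positivity
  have hP3 : (0:ℝ) < goldenRatio ^ ((n:ℝ)/3) := Real.rpow_pos_of_pos goldenRatio_pos _
  have hnle : (n:ℝ) ≤ q ^ n / (q - 1) := by
    rw [le_div_iff₀ (by linarith)]
    exact hbern
  have hnterm : (n:ℝ) * (3 * goldenRatio ^ ((n:ℝ)/3))
      ≤ (3/(q-1)) * goldenRatio ^ ((n:ℝ)/2) := by
    calc (n:ℝ) * (3 * goldenRatio ^ ((n:ℝ)/3))
        ≤ (q ^ n / (q - 1)) * (3 * goldenRatio ^ ((n:ℝ)/3)) := by
          apply mul_le_mul_of_nonneg_right hnle (by positivity)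
      _ = (3/(q-1)) * (q ^ n * goldenRatio ^ ((n:ℝ)/3)) := by ring
      _ = (3/(q-1)) * goldenRatio ^ ((n:ℝ)/2) := by rw [hq6, hsplitpow]
  have habs : |(necklaceCount n : ℝ) * n - goldenRatio ^ n|
      ≤ (4 + 3/(q-1)) * goldenRatio ^ ((n:ℝ)/2) := by
    rw [hkey]
    have hEnn : (0:ℝ) ≤ (E : ℝ) := Nat.cast_nonneg _
    calc |(F:ℝ) + (E:ℝ) - goldenRatio ^ n|
        ≤ |(F:ℝ) - goldenRatio ^ n| + (E:ℝ) := by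
          rw [show (F:ℝ) + (E:ℝ) - goldenRatio ^ n = ((F:ℝ) - goldenRatio ^ n) + (E:ℝ) by ring]
          refine (abs_add_le _ _).trans ?_
          rw [abs_of_nonneg hEnn]
      _ ≤ 1 + (3 * goldenRatio ^ ((n:ℝ)/2) + (n:ℝ) * (3 * goldenRatio ^ ((n:ℝ)/3))) := by
          linarith
      _ ≤ (4 + 3/(q-1)) * goldenRatio ^ ((n:ℝ)/2) := by
          have hexp : (4 + 3/(q-1)) * goldenRatio ^ ((n:ℝ)/2)
              = 4 * goldenRatio ^ ((n:ℝ)/2) + (3/(q-1)) * goldenRatio ^ ((n:ℝ)/2) := by ring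
          rw [hexp]
          linarith
  have hrw : (necklaceCount n : ℝ) - goldenRatio ^ n / n
      = ((necklaceCount n : ℝ) * n - goldenRatio ^ n) / n := by
    field_simp
  rw [hrw, abs_div, abs_of_pos hnR]
  gcongr
end
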